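/- Let f be L-smooth and γ-quasar-convex with respect to a global minimizer x*, run SGD with constant step size α > 0, and fix λ > 0. Then for every t ≥ 0, E⟨∇f(x_t), x_{t+1} − x*⟩ ≤ σ²/(2λ) + (1/(2α)) E‖x_t − x*‖² − (1/(2α)) E‖x_{t+1} − x*‖² − (1/(2α) − λ/2) E‖x_{t+1} − x_t‖². -/

import Mathlib

open MeasureTheory Finset
open scoped RealInnerProductSpace

/-!
Write `x⁺ = x - α • g` for one SGD step from `x`. Since `α • g = (x - x*) - (x⁺ - x*)`,
polarization gives `2α ⟪g, x⁺ - x*⟫ = ‖x - x*‖² - ‖x⁺ - x*‖² - ‖x⁺ - x‖²`, and splitting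
`∇f(x) = g + (∇f(x) - g)` yields
`⟪∇f(x), x⁺ - x*⟫ = (‖x - x*‖² - ‖x⁺ - x*‖² - ‖x⁺ - x‖²) / (2α)`
`  + ⟪∇f(x) - g, x - x*⟫ + ⟪∇f(x) - g, x⁺ - x⟫`.
The middle term has mean zero because `x - x*` is determined by the past gradients and
`E[g | past] = ∇f(x)`. Young's inequality bounds the last term by
`‖g - ∇f(x)‖² / (2λ) + (λ/2) ‖x⁺ - x‖²`, and the conditional variance bound makes the first of
these at most `σ² / (2λ)` in expectation.
-/

section Deterministic

variable {E : Type*} [NormedAddCommGroup E] [InnerProductSpace ℝ E]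

theorem real_inner_le_sq_div_add_mul_sq (a b : E) {lam : ℝ} (hlam : 0 < lam) :
    ⟪a, b⟫ ≤ ‖a‖^2 / (2*lam) + lam/2 * ‖b‖^2 := by
  have key : ‖a‖^2 / (2*lam) + lam/2 * ‖b‖^2 - ‖a‖ * ‖b‖ = (‖a‖ - lam * ‖b‖)^2 / (2*lam) := by
    field_simp; ring
  have : 0 ≤ (‖a‖ - lam * ‖b‖)^2 / (2*lam) := by positivity
  linarith [real_inner_le_norm a b]

theorem inner_sgd_step_eq (v g x xstar : E) {α : ℝ} (hα : α ≠ 0) :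
    ⟪v, x - α • g - xstar⟫ = (1/(2*α)) * (‖x - xstar‖^2 - ‖x - α • g - xstar‖^2
        - ‖x - α • g - x‖^2) + ⟪v - g, x - xstar⟫ + ⟪v - g, x - α • g - x⟫ := by
  have hstep : x - α • g - x = -(α • g) := by abel
  have hnext : x - α • g - xstar = (x - xstar) - α • g := by abel
  rw [hstep, hnext, norm_neg, norm_sub_sq_real (x - xstar), norm_smul, mul_pow,
    Real.norm_eq_abs, sq_abs]
  simp only [inner_sub_left, inner_sub_right, inner_neg_right, real_inner_smul_right,
    real_inner_comm g, real_inner_self_eq_norm_sq]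
  field_simp
  ring

theorem inner_sgd_step_le (v g x xstar : E) {α lam : ℝ} (hα : α ≠ 0) (hlam : 0 < lam) :
    ⟪v, x - α • g - xstar⟫ ≤ (1/(2*α)) * (‖x - xstar‖^2 - ‖x - α • g - xstar‖^2
        - ‖x - α • g - x‖^2) + ⟪v - g, x - xstar⟫
      + (‖g - v‖^2 / (2*lam) + lam/2 * ‖x - α • g - x‖^2) := by
  rw [inner_sgd_step_eq v g x xstar hα, ← norm_neg (g - v), neg_sub]
  linarith [real_inner_le_sq_div_add_mul_sq (v - g) (x - α • g - x) hlam]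

end Deterministic

section Probability

variable {Ω E : Type*} {m mΩ : MeasurableSpace Ω} {μ : Measure Ω}
  [NormedAddCommGroup E] [InnerProductSpace ℝ E]

theorem MeasureTheory.MemLp.integrable_inner {f g : Ω → E} (hf : MemLp f 2 μ)
    (hg : MemLp g 2 μ) :
    Integrable (fun ω => ⟪f ω, g ω⟫) μ :=
  (L2.integrable_inner (𝕜 := ℝ) (hf.toLp f) (hg.toLp g)).congr <| by
    filter_upwards [hf.coeFn_toLp, hg.coeFn_toLp] with ω hfω hgω
    rw [hfω, hgω]

-- No integrability is needed: if `f` is not integrable, both `∫ f` and `μ[f|m]` are `0`.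
theorem integral_le_of_ae_condExp_le [IsProbabilityMeasure μ] (hm : m ≤ mΩ) {f : Ω → ℝ}
    {c : ℝ} (hc : ∀ᵐ ω ∂μ, μ[f|m] ω ≤ c) : ∫ ω, f ω ∂μ ≤ c := by
  rw [← integral_condExp hm]
  simpa using integral_mono_ae integrable_condExp (integrable_const c) hc

theorem integral_inner_condExp [CompleteSpace E] [IsFiniteMeasure μ] (hm : m ≤ mΩ)
    {G U : Ω → E} (hG2 : MemLp G 2 μ) (hU : StronglyMeasurable[m] U) (hU2 : MemLp U 2 μ) :
    ∫ ω, ⟪G ω, U ω⟫ ∂μ = ∫ ω, ⟪μ[G|m] ω, U ω⟫ ∂μ := by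
  rw [← integral_condExp hm]
  exact integral_congr_ae <| condExp_bilin_of_stronglyMeasurable_right (innerSL ℝ) hU
    (hG2.integrable_inner hU2) (hG2.integrable one_le_two)

theorem integral_inner_sub_eq_zero_of_condExp_ae_eq [CompleteSpace E] [IsFiniteMeasure μ]
    (hm : m ≤ mΩ) {G F U : Ω → E} (hG2 : MemLp G 2 μ) (hGF : μ[G|m] =ᵐ[μ] F)
    (hU : StronglyMeasurable[m] U) (hU2 : MemLp U 2 μ) :
    ∫ ω, ⟪F ω - G ω, U ω⟫ ∂μ = 0 := by
  have hF2 : MemLp F 2 μ := (hG2.condExp one_le_two).ae_eq hGF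
  have hGU : ∫ ω, ⟪G ω, U ω⟫ ∂μ = ∫ ω, ⟪F ω, U ω⟫ ∂μ := by
    rw [integral_inner_condExp hm hG2 hU hU2]
    refine integral_congr_ae ?_
    filter_upwards [hGF] with ω hω
    rw [hω]
  simp only [inner_sub_left]
  rw [integral_sub (hF2.integrable_inner hU2) (hG2.integrable_inner hU2), hGU, sub_self]

theorem integral_inner_sgd_step_le [CompleteSpace E] [IsProbabilityMeasure μ] (hm : m ≤ mΩ)
    {X G F : Ω → E} {xstar : E} {α σ lam : ℝ} (hX : StronglyMeasurable[m] X)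
    (hX2 : MemLp (fun ω => X ω - xstar) 2 μ) (hG2 : MemLp G 2 μ) (hGF : μ[G|m] =ᵐ[μ] F)
    (hvar : ∀ᵐ ω ∂μ, μ[fun ω => ‖G ω - F ω‖^2|m] ω ≤ σ^2) (hα : α ≠ 0) (hlam : 0 < lam) :
    ∫ ω, ⟪F ω, X ω - α • G ω - xstar⟫ ∂μ
      ≤ σ^2/(2*lam) + (1/(2*α)) * ∫ ω, ‖X ω - xstar‖^2 ∂μ
        - (1/(2*α)) * ∫ ω, ‖X ω - α • G ω - xstar‖^2 ∂μ
        - (1/(2*α) - lam/2) * ∫ ω, ‖X ω - α • G ω - X ω‖^2 ∂μ := by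
  have hF2 : MemLp F 2 μ := (hG2.condExp one_le_two).ae_eq hGF
  have hnext2 : MemLp (fun ω => X ω - α • G ω - xstar) 2 μ := by
    convert hX2.sub (hG2.const_smul α) using 2 with ω
    simp only [Pi.sub_apply, Pi.smul_apply]; abel
  have hstep2 : MemLp (fun ω => X ω - α • G ω - X ω) 2 μ := by
    convert (hG2.const_smul α).neg using 2 with ω
    simp only [Pi.neg_apply, Pi.smul_apply]; abel
  have horth := integral_inner_sub_eq_zero_of_condExp_ae_eq (U := fun ω => X ω - xstar) hm hG2
    hGF (hX.sub stronglyMeasurable_const) hX2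
  have hvar' : ∫ ω, ‖G ω - F ω‖^2 ∂μ ≤ σ^2 := integral_le_of_ae_condExp_le hm hvar
  have hA := hX2.integrable_norm_pow two_ne_zero
  have hB := hnext2.integrable_norm_pow two_ne_zero
  have hC := hstep2.integrable_norm_pow two_ne_zero
  have hV := (hG2.sub hF2).integrable_norm_pow two_ne_zero
  have hZ := (hF2.sub hG2).integrable_inner hX2
  have hAB := ((hA.sub hB).sub hC).const_mul (1/(2*α))
  have hVC := (hV.div_const (2*lam)).add (hC.const_mul (lam/2))
  have hmono : ∫ ω, ⟪F ω, X ω - α • G ω - xstar⟫ ∂μ ≤ ∫ ω, ((1/(2*α)) * (‖X ω - xstar‖^2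
      - ‖X ω - α • G ω - xstar‖^2 - ‖X ω - α • G ω - X ω‖^2) + ⟪F ω - G ω, X ω - xstar⟫
      + (‖G ω - F ω‖^2 / (2*lam) + lam/2 * ‖X ω - α • G ω - X ω‖^2)) ∂μ :=
    integral_mono (hF2.integrable_inner hnext2) ((hAB.add hZ).add hVC)
      fun ω => inner_sgd_step_le (F ω) (G ω) (X ω) xstar hα hlam
  rw [integral_add ?_ ?_, integral_add ?_ ?_, integral_add ?_ ?_, integral_const_mul,
    integral_sub ?_ ?_, integral_sub ?_ ?_, integral_div, integral_const_mul, horth] at hmono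
  · have : (∫ ω, ‖G ω - F ω‖^2 ∂μ) / (2*lam) ≤ σ^2 / (2*lam) := by gcongr
    linarith
  exacts [hA, hB, hA.sub hB, hC, hV.div_const _, hC.const_mul _, hAB, hZ, hAB.add hZ, hVC]

end Probability

theorem stronglyMeasurable_sgd_iterate {Ω E : Type*} [NormedAddCommGroup E]
    [NormedSpace ℝ E] [mE : MeasurableSpace E] [OpensMeasurableSpace E]
    [SecondCountableTopology E] {x g : ℕ → Ω → E} {x₀ : E} {α : ℝ}
    (hx0 : x 0 = fun _ => x₀) (hstep : ∀ t, x (t+1) = fun ω => x t ω - α • g t ω) (t : ℕ) :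
    StronglyMeasurable[⨆ i ∈ range t, mE.comap (g i)] (x t) := by
  induction t with
  | zero => rw [hx0]; exact stronglyMeasurable_const
  | succ k ih =>
    rw [hstep k]
    have hmono : ⨆ i ∈ range k, mE.comap (g i) ≤ ⨆ i ∈ range (k+1), mE.comap (g i) :=
      biSup_mono fun i hi => range_subset_range.2 k.le_succ hi
    have hg : Measurable[⨆ i ∈ range (k+1), mE.comap (g i)] (g k) :=
      (comap_measurable (g k)).mono (le_iSup₂_of_le k (self_mem_range_succ k) le_rfl) le_rfl
    exact (ih.mono hmono).sub (hg.stronglyMeasurable.const_smul α)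

theorem sgd_quasar_inner_product_bound_general
    {Ω : Type*} [MeasurableSpace Ω] (P : Measure Ω) [IsProbabilityMeasure P]
    {n : ℕ}
    (f' : EuclideanSpace ℝ (Fin n) → EuclideanSpace ℝ (Fin n))
    (xstar x₀ : EuclideanSpace ℝ (Fin n))
    (σ α lam : ℝ)
    (x g : ℕ → Ω → EuclideanSpace ℝ (Fin n))
    (hα0 : 0 < α) (hlam : 0 < lam)
    (hx0 : x 0 = fun _ => x₀)
    (hstep : ∀ t, x (t+1) = fun ω => x t ω - α • g t ω)
    (hgmeas : ∀ t, Measurable (g t))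
    (hgsqint : ∀ t, Integrable (fun ω => ‖g t ω‖^2) P)
    (hunbiased : ∀ t,
      MeasureTheory.condExp
          (⨆ i ∈ Finset.range t, MeasurableSpace.comap (g i) inferInstance) P (g t)
        =ᵐ[P] fun ω => f' (x t ω))
    (hvar : ∀ t, ∀ᵐ ω ∂P,
      MeasureTheory.condExp
          (⨆ i ∈ Finset.range t, MeasurableSpace.comap (g i) inferInstance) P
          (fun ω' => ‖g t ω' - f' (x t ω')‖^2) ω ≤ σ^2)
    (hsqint : ∀ t, Integrable (fun ω => ‖x t ω - xstar‖^2) P)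
:    ∀ t : ℕ,
      ∫ ω, ⟪f' (x t ω), x (t+1) ω - xstar⟫ ∂P
      ≤ σ^2/(2*lam) + (1/(2*α)) * ∫ ω, ‖x t ω - xstar‖^2 ∂P
        - (1/(2*α)) * ∫ ω, ‖x (t+1) ω - xstar‖^2 ∂P
        - (1/(2*α) - lam/2) * ∫ ω, ‖x (t+1) ω - x t ω‖^2 ∂P := by
  intro t
  have hm : ⨆ i ∈ range t, MeasurableSpace.comap (g i) inferInstance ≤ ‹MeasurableSpace Ω› :=
    iSup₂_le fun i _ => (hgmeas i).comap_le
  have hX := stronglyMeasurable_sgd_iterate hx0 hstep t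
  have hX2 : MemLp (fun ω => x t ω - xstar) 2 P :=
    (memLp_two_iff_integrable_sq_norm
      ((hX.mono hm).sub stronglyMeasurable_const).aestronglyMeasurable).2 (hsqint t)
  have hG2 : MemLp (g t) 2 P :=
    (memLp_two_iff_integrable_sq_norm (hgmeas t).aestronglyMeasurable).2 (hgsqint t)
  simp only [hstep t]
  exact integral_inner_sgd_step_le hm hX hX2 hG2 (hunbiased t) (hvar t) hα0.ne' hlam

theorem sgd_quasar_inner_product_bound
    {Ω : Type*} [MeasurableSpace Ω] (P : Measure Ω) [IsProbabilityMeasure P]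
    {n : ℕ} (f : EuclideanSpace ℝ (Fin n) → ℝ)
    (f' : EuclideanSpace ℝ (Fin n) → EuclideanSpace ℝ (Fin n))
    (xstar x₀ : EuclideanSpace ℝ (Fin n))
    (L γ σ α lam : ℝ)
    (x g : ℕ → Ω → EuclideanSpace ℝ (Fin n))
    (hgrad : ∀ y, HasGradientAt f (f' y) y)
    (hmin : ∀ y, f xstar ≤ f y)
    (hγ0 : 0 < γ) (hγ1 : γ ≤ 1)
    (hqc : ∀ y, f xstar ≥ f y + (1/γ) * ⟪f' y, xstar - y⟫)
    (hsmooth : ∀ y z, ‖f' y - f' z‖ ≤ L * ‖y - z‖)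
    (hα0 : 0 < α) (hlam : 0 < lam)
    (hx0 : x 0 = fun _ => x₀)
    (hstep : ∀ t, x (t+1) = fun ω => x t ω - α • g t ω)
    (hgmeas : ∀ t, Measurable (g t))
    (hgint : ∀ t, Integrable (g t) P)
    (hgsqint : ∀ t, Integrable (fun ω => ‖g t ω‖^2) P)
    (hunbiased : ∀ t,
      MeasureTheory.condExp
          (⨆ i ∈ Finset.range t, MeasurableSpace.comap (g i) inferInstance) P (g t)
        =ᵐ[P] fun ω => f' (x t ω))
    (hvar : ∀ t, ∀ᵐ ω ∂P,
      MeasureTheory.condExp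
          (⨆ i ∈ Finset.range t, MeasurableSpace.comap (g i) inferInstance) P
          (fun ω' => ‖g t ω' - f' (x t ω')‖^2) ω ≤ σ^2)
    (hsqint : ∀ t, Integrable (fun ω => ‖x t ω - xstar‖^2) P)
    (hinnerint : ∀ t, Integrable (fun ω => ⟪f' (x t ω), x (t+1) ω - xstar⟫) P)
:    ∀ t : ℕ,
      ∫ ω, ⟪f' (x t ω), x (t+1) ω - xstar⟫ ∂P
      ≤ σ^2/(2*lam) + (1/(2*α)) * ∫ ω, ‖x t ω - xstar‖^2 ∂P
        - (1/(2*α)) * ∫ ω, ‖x (t+1) ω - xstar‖^2 ∂P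
        - (1/(2*α) - lam/2) * ∫ ω, ‖x (t+1) ω - x t ω‖^2 ∂P :=
  sgd_quasar_inner_product_bound_general P f' xstar x₀ σ α lam x g hα0 hlam hx0 hstep hgmeas hgsqint
    hunbiased hvar hsqint
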